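/- Let (c_n)_{n∈ℕ₀} ∈ ℓ²(ℕ₀) and let (e_n)_{n∈ℕ₀} be a sequence in L²([0,π]) of the form e_n(x) = cos((2n + t/π)x) + r_n(x)/max(n,1) with ∑_n ‖r_n‖²_{L²} ≤ C₀, for a fixed t ∈ [0,π]. Then the series ∑_n c_n e_n converges in L²([0,π]) and ‖∑_n c_n e_n‖²_{L²([0,π])} ≤ C ∑_n |c_n|², with C depending only on C₀ (not on t or (c_n)). -/

import Mathlib

/-!
Write `cos ((2n + s) x) = (e^{i(2n+s)x} + e^{-i(2n+s)x}) / 2`. On `[0, π]` each family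
`x ↦ e^{i(2k+a)x}` (`k ∈ ℤ`) is orthogonal with norm `√π`, because the common phase `e^{iax}`
cancels in the inner products; hence the cosines form a Bessel sequence with bound `π` whatever
`s` is. The perturbations `r n / max n 1` have square-summable norms with sum at most `C₀`, so by
Cauchy–Schwarz they form a Bessel sequence with bound `C₀`. The sum of the two is Bessel with
bound `2 (π + C₀)`, and in a Hilbert space a Bessel sequence sums every `ℓ²` coefficient sequence,
with the same bound on the sum.
-/

open MeasureTheory Filter
open scoped Real

def IsBesselSeq (𝕜 : Type*) {E ι : Type*} [RCLike 𝕜] [NormedAddCommGroup E] [NormedSpace 𝕜 E]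
    (e : ι → E) (B : ℝ) : Prop :=
  ∀ (c : ι → 𝕜) (s : Finset ι), ‖∑ i ∈ s, c i • e i‖ ^ 2 ≤ B * ∑ i ∈ s, ‖c i‖ ^ 2

namespace IsBesselSeq

variable {𝕜 E ι : Type*} [RCLike 𝕜] [NormedAddCommGroup E] [NormedSpace 𝕜 E] {e f : ι → E}
  {B B' : ℝ}

theorem mono (he : IsBesselSeq 𝕜 e B) (h : B ≤ B') : IsBesselSeq 𝕜 e B' := fun c s =>
  (he c s).trans (mul_le_mul_of_nonneg_right h (Finset.sum_nonneg fun _ _ => by positivity))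

theorem const_smul (he : IsBesselSeq 𝕜 e B) (a : 𝕜) :
    IsBesselSeq 𝕜 (fun i => a • e i) (‖a‖ ^ 2 * B) := by
  intro c s
  simp only [smul_comm (c _) a, ← Finset.smul_sum, norm_smul, mul_pow, mul_assoc]
  exact mul_le_mul_of_nonneg_left (he c s) (by positivity)

theorem add (he : IsBesselSeq 𝕜 e B) (hf : IsBesselSeq 𝕜 f B') :
    IsBesselSeq 𝕜 (e + f) (2 * (B + B')) := by
  intro c s
  simp only [Pi.add_apply, smul_add, Finset.sum_add_distrib]
  set x := ∑ i ∈ s, c i • e i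
  set y := ∑ i ∈ s, c i • f i
  have hxy : ‖x + y‖ ^ 2 ≤ 2 * ‖x‖ ^ 2 + 2 * ‖y‖ ^ 2 := by
    nlinarith [norm_add_le x y, norm_nonneg (x + y), sq_nonneg (‖x‖ - ‖y‖)]
  linarith [he c s, hf c s]

theorem of_summable_norm_sq (h : Summable fun i => ‖e i‖ ^ 2) :
    IsBesselSeq 𝕜 e (∑' i, ‖e i‖ ^ 2) := by
  intro c s
  calc ‖∑ i ∈ s, c i • e i‖ ^ 2 ≤ (∑ i ∈ s, ‖c i‖ * ‖e i‖) ^ 2 := by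
        gcongr
        exact (norm_sum_le _ _).trans_eq (by simp only [norm_smul])
    _ ≤ (∑ i ∈ s, ‖c i‖ ^ 2) * ∑ i ∈ s, ‖e i‖ ^ 2 := Finset.sum_mul_sq_le_sq_mul_sq _ _ _
    _ ≤ (∑ i ∈ s, ‖c i‖ ^ 2) * ∑' i, ‖e i‖ ^ 2 := by
        gcongr
        exact h.sum_le_tsum s fun i _ => by positivity
    _ = _ := mul_comm _ _

theorem summable [CompleteSpace E] (he : IsBesselSeq 𝕜 e B) {c : ι → 𝕜}
    (hc : Summable fun i => ‖c i‖ ^ 2) : Summable fun i => c i • e i := by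
  refine summable_iff_vanishing_norm.mpr fun ε hε => ?_
  obtain ⟨s, hs⟩ := summable_iff_vanishing_norm.mp hc (ε ^ 2 / (|B| + 1)) (by positivity)
  refine ⟨s, fun t ht => ?_⟩
  have htail : ∑ i ∈ t, ‖c i‖ ^ 2 < ε ^ 2 / (|B| + 1) := by
    simpa [Real.norm_eq_abs, abs_of_nonneg (Finset.sum_nonneg fun i _ => sq_nonneg ‖c i‖)]
      using hs t ht
  have hsq : ‖∑ i ∈ t, c i • e i‖ ^ 2 < ε ^ 2 :=
    calc ‖∑ i ∈ t, c i • e i‖ ^ 2 ≤ |B| * ∑ i ∈ t, ‖c i‖ ^ 2 :=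
          (he c t).trans (mul_le_mul_of_nonneg_right (le_abs_self B)
            (Finset.sum_nonneg fun _ _ => by positivity))
      _ ≤ |B| * (ε ^ 2 / (|B| + 1)) := by gcongr
      _ < ε ^ 2 := by
          rw [mul_div_assoc', div_lt_iff₀ (by positivity)]
          nlinarith [abs_nonneg B]
  exact lt_of_pow_lt_pow_left₀ 2 hε.le hsq

theorem norm_tsum_sq_le [CompleteSpace E] (he : IsBesselSeq 𝕜 e B) {c : ι → 𝕜}
    (hc : Summable fun i => ‖c i‖ ^ 2) :
    ‖∑' i, c i • e i‖ ^ 2 ≤ B * ∑' i, ‖c i‖ ^ 2 :=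
  le_of_tendsto_of_tendsto' ((he.summable hc).hasSum.norm.pow 2) (hc.hasSum.const_mul B)
    fun s => he c s

end IsBesselSeq

theorem Orthonormal.isBesselSeq {𝕜 E ι : Type*} [RCLike 𝕜] [NormedAddCommGroup E]
    [InnerProductSpace 𝕜 E] {v : ι → E} (hv : Orthonormal 𝕜 v) : IsBesselSeq 𝕜 v 1 := by
  intro c s
  have := hv.orthogonalFamily.norm_sum c s
  simp only [LinearIsometry.toSpanSingleton_apply] at this
  rw [this, one_mul]

local notation "μπ" => volume.restrict (Set.Icc (0 : ℝ) π)

theorem integral_norm_sq_eq_norm_sq {α 𝕜 : Type*} [MeasurableSpace α] {μ : Measure α} [RCLike 𝕜]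
    (f : Lp 𝕜 2 μ) : ∫ x, ‖f x‖ ^ 2 ∂μ = ‖f‖ ^ 2 := by
  rw [norm_sq_eq_re_inner (𝕜 := 𝕜), L2.inner_def, ← integral_re (L2.integrable_inner f f)]
  simp only [inner_self_eq_norm_sq]

theorem memLp_cexp_mul_I (a : ℝ) : MemLp (fun x : ℝ => Complex.exp (a * x * Complex.I)) 2 μπ :=
  MemLp.of_bound (by fun_prop) 1 (ae_of_all _ fun x => by
    rw [← Complex.ofReal_mul, Complex.norm_exp_ofReal_mul_I])

noncomputable def expLp (a : ℝ) : Lp ℂ 2 μπ := (memLp_cexp_mul_I a).toLp _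

theorem inner_expLp (a b : ℝ) :
    inner ℂ (expLp a) (expLp b) = ∫ x in (0)..π, Complex.exp ((b - a) * x * Complex.I) := by
  rw [L2.inner_def, intervalIntegral.integral_of_le Real.pi_pos.le, ← integral_Icc_eq_integral_Ioc]
  refine integral_congr_ae ?_
  filter_upwards [(memLp_cexp_mul_I a).coeFn_toLp, (memLp_cexp_mul_I b).coeFn_toLp] with x ha hb
  rw [expLp, expLp, ha, hb, RCLike.inner_apply, ← Complex.exp_conj, ← Complex.exp_add]
  congr 1
  simp only [map_mul, Complex.conj_ofReal, Complex.conj_I]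
  ring

theorem integral_cexp_two_mul_int_mul_I (k : ℤ) :
    ∫ x in (0)..π, Complex.exp (2 * k * x * Complex.I) = if k = 0 then (π : ℂ) else 0 := by
  split_ifs with hk
  · simp [hk]
  have hc : 2 * (k : ℂ) * Complex.I ≠ 0 := by simp [hk]
  have hlin (x : ℝ) : 2 * (k : ℂ) * x * Complex.I = 2 * k * Complex.I * x := by ring
  have hper : 2 * (k : ℂ) * Complex.I * π = k * (2 * π * Complex.I) := by ring
  simp_rw [hlin]
  rw [integral_exp_mul_complex hc, hper, Complex.exp_int_mul_two_pi_mul_I]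
  simp

theorem inner_expLp_two_mul_int_add (a : ℝ) (k l : ℤ) :
    inner ℂ (expLp (2 * k + a)) (expLp (2 * l + a)) = if k = l then (π : ℂ) else 0 := by
  have hfreq : ((2 * l + a : ℝ) : ℂ) - ((2 * k + a : ℝ) : ℂ) = 2 * ((l - k : ℤ) : ℂ) := by
    push_cast; ring
  simp only [inner_expLp, hfreq, integral_cexp_two_mul_int_mul_I, sub_eq_zero, eq_comm]

theorem orthonormal_expLp_two_mul_int_add (a : ℝ) :
    Orthonormal ℂ fun k : ℤ => ((√π : ℝ) : ℂ)⁻¹ • expLp (2 * k + a) := by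
  rw [orthonormal_iff_ite]
  intro k l
  rw [inner_smul_left, inner_smul_right, inner_expLp_two_mul_int_add]
  split_ifs
  · rw [map_inv₀, Complex.conj_ofReal, ← mul_assoc, ← mul_inv, ← Complex.ofReal_mul,
      Real.mul_self_sqrt Real.pi_pos.le, inv_mul_cancel₀ (by exact_mod_cast Real.pi_ne_zero)]
  · simp

theorem isBesselSeq_expLp_two_mul_int_add {ι : Type*} (a : ℝ) {m : ι → ℤ}
    (hm : Function.Injective m) : IsBesselSeq ℂ (fun i => expLp (2 * m i + a)) π := by
  have hsqrt : ((√π : ℝ) : ℂ) ≠ 0 := by exact_mod_cast (Real.sqrt_pos.mpr Real.pi_pos).ne'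
  have := (((orthonormal_expLp_two_mul_int_add a).comp m hm).isBesselSeq).const_smul
    ((√π : ℝ) : ℂ)
  simpa only [Function.comp_apply, smul_inv_smul₀ hsqrt, Complex.norm_real, Real.norm_eq_abs,
    sq_abs, Real.sq_sqrt Real.pi_pos.le, mul_one] using this

theorem memLp_cos_mul (s : ℝ) (n : ℕ) :
    MemLp (fun x : ℝ => (Real.cos ((2 * n + s) * x) : ℂ)) 2 μπ :=
  MemLp.of_bound (by fun_prop) 1 (ae_of_all _ fun x => by
    rw [Complex.norm_real, Real.norm_eq_abs]; exact Real.abs_cos_le_one _)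

noncomputable def cosLp (s : ℝ) (n : ℕ) : Lp ℂ 2 μπ := (memLp_cos_mul s n).toLp _

theorem cosLp_eq (s : ℝ) (n : ℕ) :
    cosLp s n = (2 : ℂ)⁻¹ • (expLp (2 * (n : ℤ) + s) + expLp (2 * (-(n : ℤ) : ℤ) + -s)) := by
  rw [cosLp, expLp, expLp, ← MemLp.toLp_add, ← MemLp.toLp_const_smul,
    MemLp.toLp_eq_toLp_iff]
  refine ae_of_all _ fun x => ?_
  simp only [Pi.smul_apply, Pi.add_apply, smul_eq_mul, Complex.ofReal_cos]
  rw [eq_inv_mul_iff_mul_eq₀ two_ne_zero, Complex.two_cos]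
  congr 2 <;> push_cast <;> ring

theorem isBesselSeq_cosLp (s : ℝ) : IsBesselSeq ℂ (cosLp s) π := by
  have h := ((isBesselSeq_expLp_two_mul_int_add s Nat.cast_injective).add
    (isBesselSeq_expLp_two_mul_int_add (-s) (neg_injective.comp Nat.cast_injective))).const_smul
    (2 : ℂ)⁻¹
  convert h using 1
  · exact funext fun n => cosLp_eq s n
  · norm_num; ring

theorem isBesselSeq_smul_of_tsum_norm_sq_le {𝕜 E ι : Type*} [RCLike 𝕜] [NormedAddCommGroup E]
    [NormedSpace 𝕜 E] {f : ι → E} {w : ι → 𝕜} {C : ℝ} (hf : Summable fun i => ‖f i‖ ^ 2)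
    (hC : ∑' i, ‖f i‖ ^ 2 ≤ C) (hw : ∀ i, ‖w i‖ ≤ 1) : IsBesselSeq 𝕜 (fun i => w i • f i) C := by
  have hle (i : ι) : ‖w i • f i‖ ^ 2 ≤ ‖f i‖ ^ 2 := by
    rw [norm_smul]
    gcongr
    exact mul_le_of_le_one_left (norm_nonneg _) (hw i)
  have hsum : Summable fun i => ‖w i • f i‖ ^ 2 := hf.of_nonneg_of_le (fun _ => by positivity) hle
  exact (IsBesselSeq.of_summable_norm_sq hsum).mono ((hsum.tsum_le_tsum hle hf).trans hC)

theorem MeasureTheory.MemLp.integral_norm_sq_eq {α 𝕜 : Type*} [MeasurableSpace α] {μ : Measure α}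
    [RCLike 𝕜] {f : α → 𝕜} (hf : MemLp f 2 μ) : ∫ x, ‖f x‖ ^ 2 ∂μ = ‖hf.toLp f‖ ^ 2 := by
  rw [← integral_norm_sq_eq_norm_sq]
  refine integral_congr_ae ?_
  filter_upwards [hf.coeFn_toLp] with x hx
  rw [hx]

theorem MeasureTheory.Lp.coeFn_sum_smul_ae_eq {α 𝕜 E ι : Type*} [MeasurableSpace α]
    {μ : Measure α} {p : ENNReal} [NormedRing 𝕜] [NormedAddCommGroup E] [Module 𝕜 E]
    [IsBoundedSMul 𝕜 E]
    {e : ι → Lp E p μ} {f : ι → α → E} (h : ∀ i, e i =ᵐ[μ] f i) (c : ι → 𝕜) (s : Finset ι) :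
    ⇑(∑ i ∈ s, c i • e i) =ᵐ[μ] fun x => ∑ i ∈ s, c i • f i x := by
  have hterm : ∀ᵐ x ∂μ, ∀ i ∈ s, (c i • e i) x = c i • f i x :=
    (eventually_all_finset s).mpr fun i _ => by
      filter_upwards [Lp.coeFn_smul (c i) (e i), h i] with x h1 h2
      rw [h1, Pi.smul_apply, h2]
  filter_upwards [Lp.coeFn_fun_finsetSum s fun i => c i • e i, hterm] with x hsum hx
  rw [hsum]
  exact Finset.sum_congr rfl hx

theorem IsBesselSeq.exists_memLp_tendsto_integral_norm_sub_sq {α 𝕜 : Type*}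
    [MeasurableSpace α] {μ : Measure α} [RCLike 𝕜] {e : ℕ → Lp 𝕜 2 μ} {f : ℕ → α → 𝕜} {B : ℝ}
    (he : IsBesselSeq 𝕜 e B) (hf : ∀ n, e n =ᵐ[μ] f n) {c : ℕ → 𝕜}
    (hc : Summable fun n => ‖c n‖ ^ 2) :
    ∃ g : α → 𝕜, MemLp g 2 μ ∧
      Tendsto (fun N => ∫ x, ‖(∑ n ∈ Finset.range N, c n * f n x) - g x‖ ^ 2 ∂μ) atTop (nhds 0) ∧
      ∫ x, ‖g x‖ ^ 2 ∂μ ≤ B * ∑' n, ‖c n‖ ^ 2 := by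
  set g : Lp 𝕜 2 μ := ∑' n, c n • e n
  refine ⟨g, Lp.memLp g, ?_, ?_⟩
  · have hlim := (tendsto_iff_norm_sub_tendsto_zero.mp
      (he.summable hc).hasSum.tendsto_sum_nat).pow 2
    rw [zero_pow two_ne_zero] at hlim
    refine hlim.congr fun N => ?_
    rw [← integral_norm_sq_eq_norm_sq]
    refine integral_congr_ae ?_
    filter_upwards [Lp.coeFn_sub (∑ n ∈ Finset.range N, c n • e n) g,
      Lp.coeFn_sum_smul_ae_eq hf c (Finset.range N)] with x hsub hsum
    rw [hsub, Pi.sub_apply, hsum]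
    rfl
  · rw [integral_norm_sq_eq_norm_sq]
    exact he.norm_tsum_sq_le hc

/-- Let `(c_n) ∈ ℓ²(ℕ₀)` and `e_n(x) = cos((2n + t/π)x) + r_n(x)/max(n,1)` in
`L²([0,π])` with `∑ ‖r_n‖² ≤ C₀`, for fixed `t ∈ [0,π]`. Then `∑ c_n e_n`
converges in `L²([0,π])` and `‖∑ c_n e_n‖² ≤ C ∑ |c_n|²`, with `C` depending
only on `C₀` (not on `t` or `(c_n)`). -/
theorem perturbed_cosine_bessel_bound (C₀ : ℝ) (hC₀ : 0 ≤ C₀) :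
    ∃ C : ℝ, 0 < C ∧
      ∀ t : ℝ, t ∈ Set.Icc (0 : ℝ) Real.pi →
      ∀ (c : ℕ → ℂ) (r : ℕ → ℝ → ℂ),
        Summable (fun n => ‖c n‖ ^ 2) →
        (∀ n, MemLp (r n) 2 (volume.restrict (Set.Icc (0 : ℝ) Real.pi))) →
        Summable (fun n => ∫ x in Set.Icc (0 : ℝ) Real.pi,
          ‖r n x‖ ^ 2) →
        (∑' n, ∫ x in Set.Icc (0 : ℝ) Real.pi, ‖r n x‖ ^ 2) ≤ C₀ →
        ∃ g : ℝ → ℂ,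
          MemLp g 2 (volume.restrict (Set.Icc (0 : ℝ) Real.pi)) ∧
          Tendsto (fun N => ∫ x in Set.Icc (0 : ℝ) Real.pi,
              ‖(∑ n ∈ Finset.range N, c n *
                ((Real.cos ((2 * (n : ℝ) + t / Real.pi) * x) : ℂ)
                  + r n x / ((max n 1 : ℕ) : ℂ))) - g x‖ ^ 2)
            atTop (nhds 0) ∧
          (∫ x in Set.Icc (0 : ℝ) Real.pi, ‖g x‖ ^ 2) ≤
            C * ∑' n, ‖c n‖ ^ 2 := by
  refine ⟨2 * (π + C₀), by positivity, fun t _ c r hc hr hrs hrC => ?_⟩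
  simp only [fun n => (hr n).integral_norm_sq_eq] at hrs hrC
  have hw (n : ℕ) : ‖((max n 1 : ℕ) : ℂ)⁻¹‖ ≤ 1 := by
    rw [norm_inv, Complex.norm_natCast]
    exact inv_le_one_of_one_le₀ (by exact_mod_cast le_max_right n 1)
  refine ((isBesselSeq_cosLp (t / π)).add (isBesselSeq_smul_of_tsum_norm_sq_le hrs hrC hw)
    ).exists_memLp_tendsto_integral_norm_sub_sq (fun n => ?_) hc
  filter_upwards [Lp.coeFn_add (cosLp (t / π) n) (((max n 1 : ℕ) : ℂ)⁻¹ • (hr n).toLp (r n)),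
    (memLp_cos_mul (t / π) n).coeFn_toLp,
    Lp.coeFn_smul (((max n 1 : ℕ) : ℂ)⁻¹) ((hr n).toLp (r n)), (hr n).coeFn_toLp]
    with x hadd hcos hsmul hr
  rw [Pi.add_apply, hadd, Pi.add_apply, cosLp, hcos, hsmul, Pi.smul_apply, hr, smul_eq_mul,
    inv_mul_eq_div]
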